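/- arXiv:2209.01398 — 9 statements merged into one kernel-verified Lean document; each statement's English description precedes it below -/
import Mathlib

section
/- Let C, k, K be integers with 1 ≤ k < K < C. For a rank r ∈ {1,…,C}, define the top-k accuracy g_k(r) := 1 if r ≤ k and 0 otherwise, and the AUTKC accuracy f_K(r) := (1/K)·|{k' ∈ {1,…,K} : r ≤ k'}| = (K − min{r−1, K})/K. Then: (i) for all r, r' ∈ {1,…,C}, if g_k(r) > g_k(r') then f_K(r) > f_K(r'); (ii) there exist r, r' ∈ {1,…,C} with g_k(r) > g_k(r'); and (iii) there exist r, r' ∈ {1,…,C} with f_K(r) > f_K(r') and g_k(r) = g_k(r'). Consequently AUTKC is strictly consistent with and more discriminating than the top-k metric. -/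
/-- Top-k accuracy as a function of the rank `r` of the ground-truth label:
`1` if `r ≤ k`, and `0` otherwise. -/
noncomputable def topkAcc (k r : ℕ) : ℝ := if r ≤ k then 1 else 0

/-- AUTKC accuracy as a function of the rank `r`:
`(K − min{r−1, K}) / K`, the average of the top-k' accuracies over `k' = 1, …, K`. -/
noncomputable def autkcAcc (K r : ℕ) : ℝ := ((K : ℝ) - (min (r - 1) K : ℕ)) / K

/-- AUTKC is strictly consistent with and more discriminating than the top-k metric:
(i) every strict comparison under top-k is reproduced strictly by AUTKC;
(ii) top-k strictly separates some pair of ranks;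
(iii) AUTKC strictly separates some pair of ranks that top-k cannot separate. -/
theorem autkc_strictly_consistent_and_more_discriminating
    (C k K : ℕ) (hk : 1 ≤ k) (hkK : k < K) (hKC : K < C) :
    (∀ r ∈ Finset.Icc 1 C, ∀ r' ∈ Finset.Icc 1 C,
        topkAcc k r > topkAcc k r' → autkcAcc K r > autkcAcc K r') ∧
    (∃ r ∈ Finset.Icc 1 C, ∃ r' ∈ Finset.Icc 1 C,
        topkAcc k r > topkAcc k r') ∧
    (∃ r ∈ Finset.Icc 1 C, ∃ r' ∈ Finset.Icc 1 C,
        autkcAcc K r > autkcAcc K r' ∧ topkAcc k r = topkAcc k r') := by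
  have hK0 : (0:ℝ) < K := by
    exact_mod_cast Nat.lt_of_le_of_lt (Nat.zero_le k) hkK
  have key : ∀ r r' : ℕ, min (r - 1) K < min (r' - 1) K →
      autkcAcc K r > autkcAcc K r' := by
    intro r r' h
    unfold autkcAcc
    apply div_lt_div_of_pos_right _ hK0
    have h2 : ((min (r - 1) K : ℕ) : ℝ) < ((min (r' - 1) K : ℕ) : ℝ) :=
      Nat.cast_lt.mpr h
    linarith
  refine ⟨?_, ?_, ?_⟩
  · intro r hr r' hr' hgt
    simp only [topkAcc] at hgt
    split_ifs at hgt with h1 h2 h2 <;> try norm_num at hgt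
    -- h1 : r ≤ k, h2 : ¬ r' ≤ k
    apply key
    have hrK : min (r - 1) K = r - 1 := min_eq_left (by omega)
    have : k ≤ min (r' - 1) K := le_min (by omega) (le_of_lt hkK)
    omega
  · exact ⟨1, Finset.mem_Icc.2 ⟨le_refl 1, by omega⟩, C,
      Finset.mem_Icc.2 ⟨by omega, le_refl C⟩, by
        simp only [topkAcc]
        rw [if_pos hk, if_neg (by omega)]; norm_num⟩
  · refine ⟨k + 1, Finset.mem_Icc.2 ⟨by omega, by omega⟩, K + 1,
      Finset.mem_Icc.2 ⟨by omega, by omega⟩, key _ _ (by omega), ?_⟩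
    simp only [topkAcc]
    rw [if_neg (by omega), if_neg (by omega)]
end

section
/- Let C, k, K be integers with 1 ≤ k < K ≤ C. With g_k(r) := 1 if r ≤ k and 0 otherwise, and f_K(r) := (K − min{r−1, K})/K for r ∈ {1,…,C}, the set R := {(r, r') ∈ {1,…,C}² : f_K(r) > f_K(r') and g_k(r) > g_k(r')} has cardinality k(C − k), and the set S := {(r, r') ∈ {1,…,C}² : f_K(r) > f_K(r') and g_k(r) < g_k(r')} is empty; hence the degree of consistency |R|/(|R| + |S|) between AUTKC and top-k equals 1. -/
open Classical

open Classical in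
/-- Degree of consistency between AUTKC and top-k: the agreement set `R` has
cardinality `k(C−k)`, the disagreement set `S` is empty, and hence the degree of
consistency `|R|/(|R|+|S|)` equals `1`. -/
theorem autkc_topk_degree_of_consistency
    (C k K : ℕ) (hk : 1 ≤ k) (hkK : k < K) (hKC : K ≤ C)
    (R S : Finset (ℕ × ℕ))
    (hR : R = (Finset.Icc 1 C ×ˢ Finset.Icc 1 C).filter
        (fun p => autkcAcc K p.1 > autkcAcc K p.2 ∧ topkAcc k p.1 > topkAcc k p.2))
    (hS : S = (Finset.Icc 1 C ×ˢ Finset.Icc 1 C).filter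
        (fun p => autkcAcc K p.1 > autkcAcc K p.2 ∧ topkAcc k p.1 < topkAcc k p.2)) :
    R.card = k * (C - k) ∧ S = ∅ ∧ (R.card : ℝ) / ((R.card : ℝ) + (S.card : ℝ)) = 1 := by
  have hK0 : (0:ℝ) < (K:ℝ) := by
    have : 0 < K := lt_of_le_of_lt (Nat.zero_le k) hkK
    exact_mod_cast this
  have htopk : ∀ r r' : ℕ, (topkAcc k r > topkAcc k r') ↔ (r ≤ k ∧ k < r') := by
    intro r r'
    unfold topkAcc
    split_ifs <;> norm_num <;> omega
  have hautkc : ∀ r r' : ℕ, (autkcAcc K r > autkcAcc K r') ↔ min (r - 1) K < min (r' - 1) K := by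
    intro r r'
    unfold autkcAcc
    rw [gt_iff_lt, div_lt_div_iff_of_pos_right hK0, sub_lt_sub_iff_left, Nat.cast_lt]
  have hReq : R = Finset.Icc 1 k ×ˢ Finset.Icc (k+1) C := by
    rw [hR]
    ext ⟨r, r'⟩
    simp only [Finset.mem_filter, Finset.mem_product, Finset.mem_Icc, htopk, hautkc]
    constructor
    · rintro ⟨⟨⟨h1, h2⟩, h3, h4⟩, h5, h6, h7⟩
      omega
    · rintro ⟨⟨h1, h2⟩, h3, h4⟩
      refine ⟨⟨⟨h1, by omega⟩, by omega, h4⟩, ?_, by omega, by omega⟩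
      omega
  have hScard : S = ∅ := by
    rw [hS]
    ext ⟨r, r'⟩
    simp only [Finset.mem_filter, Finset.mem_product, Finset.mem_Icc, hautkc,
      Finset.notMem_empty, iff_false]
    rintro ⟨⟨⟨h1, h2⟩, h3, h4⟩, h5, h6⟩
    have h7 := (htopk r' r).mp h6
    omega
  have hRcard : R.card = k * (C - k) := by
    rw [hReq, Finset.card_product, Nat.card_Icc, Nat.card_Icc]
    congr 1 <;> omega
  refine ⟨hRcard, hScard, ?_⟩
  have h1 : 0 < k * (C - k) := by
    have : k < C := lt_of_lt_of_le hkK hKC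
    exact Nat.mul_pos hk (by omega)
  have h2 : (R.card : ℝ) ≠ 0 := by
    rw [hRcard]; exact_mod_cast h1.ne'
  rw [hScard]
  simp [div_self h2]
end

section
/- Let C, k, K be integers with 1 ≤ k < K ≤ C. With g_k(r) := 1 if r ≤ k and 0 otherwise, and f_K(r) := (K − min{r−1, K})/K for r ∈ {1,…,C}, the set P := {(r, r') ∈ {1,…,C}² : f_K(r) > f_K(r') and g_k(r) = g_k(r')} has cardinality k(k−1)/2 + (2C − k − K − 1)(K − k)/2, and the set Q := {(r, r') ∈ {1,…,C}² : g_k(r) > g_k(r') and f_K(r) = f_K(r')} is empty. -/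
private lemma autkc_lt_iff {K : ℕ} (hK : 0 < K) (r r' : ℕ) :
    autkcAcc K r' < autkcAcc K r ↔ min (r - 1) K < min (r' - 1) K := by
  unfold autkcAcc
  rw [div_lt_div_iff_of_pos_right (by exact_mod_cast hK), sub_lt_sub_iff_left]
  exact_mod_cast Iff.rfl

private lemma autkc_eq_iff {K : ℕ} (hK : 0 < K) (r r' : ℕ) :
    autkcAcc K r = autkcAcc K r' ↔ min (r - 1) K = min (r' - 1) K := by
  unfold autkcAcc
  have hK' : (K : ℝ) ≠ 0 := by exact_mod_cast hK.ne'
  rw [div_eq_div_iff hK' hK']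
  constructor
  · intro h
    have := mul_right_cancel₀ hK' h
    have : ((min (r - 1) K : ℕ) : ℝ) = ((min (r' - 1) K : ℕ) : ℝ) := by linarith
    exact_mod_cast this
  · intro h; rw [h]

private lemma topk_eq_iff {k : ℕ} (r r' : ℕ) :
    topkAcc k r = topkAcc k r' ↔ (r ≤ k ↔ r' ≤ k) := by
  unfold topkAcc
  split_ifs with h1 h2 h2 <;> simp [h1, h2] <;> norm_num

private lemma gauss_ico (n : ℕ) :
    2 * (∑ r ∈ Finset.Ico 1 (n + 1), (r : ℤ)) = (n + 1) * n := by
  induction n with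
  | zero => simp
  | succ m ih =>
    rw [Finset.sum_Ico_succ_top (by omega)]
    push_cast
    push_cast at ih
    ring_nf
    ring_nf at ih
    linarith

open Classical in
/-- Degree of discriminancy between AUTKC and top-k: the set `P` of pairs strictly
separated by AUTKC but not by top-k has cardinality
`k(k−1)/2 + (2C − k − K − 1)(K − k)/2`, while the set `Q` of pairs strictly separated
by top-k but not by AUTKC is empty. -/
theorem autkc_topk_degree_of_discriminancy
    (C k K : ℕ) (hk : 1 ≤ k) (hkK : k < K) (hKC : K ≤ C)
    (P Q : Finset (ℕ × ℕ))
    (hP : P = (Finset.Icc 1 C ×ˢ Finset.Icc 1 C).filter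
        (fun p => autkcAcc K p.1 > autkcAcc K p.2 ∧ topkAcc k p.1 = topkAcc k p.2))
    (hQ : Q = (Finset.Icc 1 C ×ˢ Finset.Icc 1 C).filter
        (fun p => topkAcc k p.1 > topkAcc k p.2 ∧ autkcAcc K p.1 = autkcAcc K p.2)) :
    2 * (P.card : ℤ) = (k : ℤ) * ((k : ℤ) - 1)
        + (2 * (C : ℤ) - (k : ℤ) - (K : ℤ) - 1) * ((K : ℤ) - (k : ℤ)) ∧
    Q = ∅ := by
  have hK0 : 0 < K := by omega
  constructor
  · -- cardinality of P
    set S : ℕ → Finset ℕ := fun r =>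
      if r ≤ k then Finset.Icc (r + 1) k
      else if r ≤ K then Finset.Icc (r + 1) C else ∅ with hSdef
    have hPB : P = (Finset.Icc 1 C).biUnion (fun r => (S r).image (Prod.mk r)) := by
      rw [hP]
      ext ⟨r, r'⟩
      simp only [Finset.mem_filter, Finset.mem_product, Finset.mem_Icc, Finset.mem_biUnion,
        Finset.mem_image, Prod.mk.injEq, gt_iff_lt]
      constructor
      · rintro ⟨⟨⟨hr1, hrC⟩, hr'1, hr'C⟩, hgt, heq⟩
        have hmin : min (r - 1) K < min (r' - 1) K := (autkc_lt_iff hK0 _ _).mp hgt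
        have hiff : r ≤ k ↔ r' ≤ k := (topk_eq_iff _ _).mp heq
        refine ⟨r, ⟨hr1, hrC⟩, r', ?_, rfl, rfl⟩
        simp only [hSdef]
        by_cases hrk : r ≤ k
        · simp only [if_pos hrk, Finset.mem_Icc]; omega
        · rw [if_neg hrk, if_pos (by omega : r ≤ K)]
          simp only [Finset.mem_Icc]; omega
      · rintro ⟨a, ha, b, hb, rfl, rfl⟩
        simp only [hSdef] at hb
        by_cases hrk : a ≤ k
        · rw [if_pos hrk] at hb
          simp only [Finset.mem_Icc] at hb ha
          refine ⟨⟨ha, by omega, by omega⟩, ?_, ?_⟩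
          · rw [autkc_lt_iff hK0]; omega
          · rw [topk_eq_iff]; omega
        · rw [if_neg hrk] at hb
          by_cases hrK : a ≤ K
          · rw [if_pos hrK] at hb
            simp only [Finset.mem_Icc] at hb ha
            refine ⟨⟨ha, by omega, by omega⟩, ?_, ?_⟩
            · rw [autkc_lt_iff hK0]; omega
            · rw [topk_eq_iff]; omega
          · rw [if_neg hrK] at hb; simp at hb
    have hdisj : ∀ x ∈ Finset.Icc 1 C, ∀ y ∈ Finset.Icc 1 C, x ≠ y →
        Disjoint ((S x).image (Prod.mk x)) ((S y).image (Prod.mk y)) := by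
      intro x _ y _ hxy
      rw [Finset.disjoint_left]
      rintro ⟨a, b⟩ hmx hmy
      simp only [Finset.mem_image, Prod.mk.injEq] at hmx hmy
      obtain ⟨_, _, h1, _⟩ := hmx
      obtain ⟨_, _, h2, _⟩ := hmy
      exact hxy (h1.trans h2.symm)
    have hcard : (P.card : ℤ) = ∑ r ∈ Finset.Icc 1 C, ((S r).card : ℤ) := by
      rw [hPB, Finset.card_biUnion hdisj]
      push_cast
      refine Finset.sum_congr rfl fun r _ => ?_
      rw [Finset.card_image_of_injective _ (fun a b h => by simpa using h)]
    rw [hcard, ← Finset.Ico_add_one_right_eq_Icc,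
      ← Finset.sum_Ico_consecutive (fun r => ((S r).card : ℤ))
        (by omega : 1 ≤ K + 1) (by omega : K + 1 ≤ C + 1),
      ← Finset.sum_Ico_consecutive (fun r => ((S r).card : ℤ))
        (by omega : 1 ≤ k + 1) (by omega : k + 1 ≤ K + 1)]
    have h3 : ∑ r ∈ Finset.Ico (K + 1) (C + 1), ((S r).card : ℤ) = 0 := by
      refine Finset.sum_eq_zero fun r hr => ?_
      simp only [Finset.mem_Ico] at hr
      simp only [hSdef, if_neg (by omega : ¬ r ≤ k), if_neg (by omega : ¬ r ≤ K)]
      simp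
    have h1 : ∑ r ∈ Finset.Ico 1 (k + 1), ((S r).card : ℤ)
        = (k : ℤ) * k - ∑ r ∈ Finset.Ico 1 (k + 1), (r : ℤ) := by
      have he : ∑ r ∈ Finset.Ico 1 (k + 1), ((S r).card : ℤ)
          = ∑ r ∈ Finset.Ico 1 (k + 1), ((k : ℤ) - r) := by
        refine Finset.sum_congr rfl fun r hr => ?_
        simp only [Finset.mem_Ico] at hr
        simp only [hSdef, if_pos (by omega : r ≤ k), Nat.card_Icc]
        omega
      rw [he, Finset.sum_sub_distrib, Finset.sum_const, Nat.card_Ico, nsmul_eq_mul]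
      push_cast
      ring
    have h2 : ∑ r ∈ Finset.Ico (k + 1) (K + 1), ((S r).card : ℤ)
        = ((K : ℤ) - k) * C - (∑ r ∈ Finset.Ico 1 (K + 1), (r : ℤ)
            - ∑ r ∈ Finset.Ico 1 (k + 1), (r : ℤ)) := by
      have hsplit : ∑ r ∈ Finset.Ico 1 (k + 1), (r : ℤ)
          + ∑ r ∈ Finset.Ico (k + 1) (K + 1), (r : ℤ)
          = ∑ r ∈ Finset.Ico 1 (K + 1), (r : ℤ) :=
        Finset.sum_Ico_consecutive _ (by omega) (by omega)
      have : ∑ r ∈ Finset.Ico (k + 1) (K + 1), ((S r).card : ℤ)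
          = ∑ r ∈ Finset.Ico (k + 1) (K + 1), ((C : ℤ) - r) := by
        refine Finset.sum_congr rfl fun r hr => ?_
        simp only [Finset.mem_Ico] at hr
        simp only [hSdef, if_neg (by omega : ¬ r ≤ k), if_pos (by omega : r ≤ K),
          Nat.card_Icc]
        omega
      rw [this, Finset.sum_sub_distrib, Finset.sum_const, Nat.card_Ico, nsmul_eq_mul]
      have hc : ((K + 1 - (k + 1) : ℕ) : ℤ) = (K : ℤ) - k := by omega
      rw [hc]
      linarith
    have gA := gauss_ico k
    have gB := gauss_ico K
    rw [h1, h2, h3]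
    push_cast at gA gB ⊢
    linarith
  · -- Q is empty
    rw [hQ]
    ext ⟨r, r'⟩
    simp only [Finset.mem_filter, Finset.mem_product, Finset.mem_Icc, Finset.notMem_empty,
      iff_false, not_and]
    rintro ⟨⟨hr1, hrC⟩, hr'1, hr'C⟩ hgt heq
    have hmin : min (r - 1) K = min (r' - 1) K := (autkc_eq_iff hK0 _ _).mp heq
    unfold topkAcc at hgt
    split_ifs at hgt <;> norm_num at hgt <;> omega
end

section
/- Let C ≥ 2 be an integer, s ∈ ℝ^C, y ∈ {1,…,C}, and 1 ≤ K ≤ C−1. Then Σ_{k=1}^{K} 𝟙[s_y ≤ (s_{∖y})_{[k]}] = −1 + Σ_{k=1}^{K+1} 𝟙[s_y ≤ s_{[k]}], where 𝟙 is the indicator function. -/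
/-!
For a list sorted increasingly, the `k`-th largest entry is `≥ x` exactly when at least `k`
entries are `≥ x`; hence `Σ_{k=1}^{K} 𝟙[x ≤ k-th largest] = min K m`, where `m` counts the
entries `≥ x`. For `x = s_y` deleting the `y`-th entry lowers `m` by exactly one, and
`min (K + 1) (m + 1) = min K m + 1`.
-/

/-- The `k`-th largest entry (1-indexed, counted with multiplicity) of the
vector `s ∈ ℝ^C`. -/
noncomputable def kthLargest {C : ℕ} (s : Fin C → ℝ) (k : ℕ) : ℝ :=
  ((List.ofFn s).insertionSort (· ≤ ·)).getD (C - k) 0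

/-- The `k`-th largest entry (1-indexed, counted with multiplicity) of the vector in
`ℝ^{C−1}` obtained from `s ∈ ℝ^C` by deleting its `y`-th entry. -/
noncomputable def kthLargestDel {C : ℕ} (s : Fin C → ℝ) (y : Fin C) (k : ℕ) : ℝ :=
  (((List.ofFn s).eraseIdx y).insertionSort (· ≤ ·)).getD (C - 1 - k) 0

theorem Finset.sum_Icc_one_ite_le_eq_min (K m : ℕ) :
    (∑ k ∈ Finset.Icc 1 K, if k ≤ m then (1 : ℤ) else 0) = (min K m : ℕ) := by
  rw [Finset.sum_boole]
  have : (Finset.Icc 1 K).filter (· ≤ m) = Finset.Icc 1 (min K m) := by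
    ext k
    simp only [Finset.mem_filter, Finset.mem_Icc, le_min_iff]
    omega
  rw [this, Nat.card_Icc, Nat.add_sub_cancel]

namespace List

theorem countP_eq_countP_eraseIdx_add_one {α : Type*} {p : α → Bool} {l : List α} {i : ℕ}
    (hi : i < l.length) (hp : p l[i]) : l.countP p = (l.eraseIdx i).countP p + 1 := by
  classical
  rw [((perm_cons_erase (getElem_mem hi)).trans ((erase_getElem hi).cons _)).countP_eq,
    countP_cons_of_pos hp]

section SortedLE

variable {α : Type*} [LinearOrder α] {l : List α}

theorem SortedLE.getElem_le_of_mem_drop (hl : l.SortedLE) {i : ℕ} (hi : i < l.length) {a : α}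
    (ha : a ∈ l.drop i) : l[i] ≤ a := by
  obtain ⟨j, hj, rfl⟩ := mem_drop_iff_getElem.1 ha
  exact hl.monotone_get (a := ⟨i, hi⟩) (b := ⟨i + j, by omega⟩) (by simp [Fin.le_def])

theorem SortedLE.le_getElem_of_mem_take (hl : l.SortedLE) {i : ℕ} (hi : i < l.length) {a : α}
    (ha : a ∈ l.take (i + 1)) : a ≤ l[i] := by
  obtain ⟨j, hj, rfl⟩ := mem_take_iff_getElem.1 ha
  exact hl.monotone_get (a := ⟨j, by omega⟩) (b := ⟨i, hi⟩) (by simp [Fin.le_def]; omega)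

theorem SortedLE.le_getElem_length_sub_iff (hl : l.SortedLE) (x : α) {k : ℕ} (hk1 : 1 ≤ k)
    (hk : k ≤ l.length) :
    x ≤ l[l.length - k]'(by omega) ↔ k ≤ l.countP (x ≤ ·) := by
  set i := l.length - k
  have hi : i < l.length := by omega
  constructor
  · intro hx
    calc k = (l.drop i).length := by simp only [length_drop]; omega
      _ = (l.drop i).countP (x ≤ ·) :=
        (countP_eq_length.2 fun a ha => by
          simpa using hx.trans (hl.getElem_le_of_mem_drop hi ha)).symm
      _ ≤ l.countP (x ≤ ·) := (drop_sublist _ _).countP_le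
  · intro hk'
    by_contra! hx
    have htake : (l.take (i + 1)).countP (x ≤ ·) = 0 :=
      countP_eq_zero.2 fun a ha => by simpa using (hl.le_getElem_of_mem_take hi ha).trans_lt hx
    have hcount : l.countP (x ≤ ·) ≤ k - 1 :=
      calc l.countP (x ≤ ·)
          = (l.take (i + 1)).countP (x ≤ ·) + (l.drop (i + 1)).countP (x ≤ ·) := by
            rw [← countP_append, take_append_drop]
        _ ≤ 0 + (l.drop (i + 1)).length := by
            rw [htake]; exact Nat.add_le_add_left countP_le_length _
        _ = k - 1 := by simp only [length_drop]; omega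
    omega

theorem SortedLE.sum_Icc_one_ite_le_getD_eq_min (hl : l.SortedLE) {n K : ℕ} (hn : l.length = n)
    (hK : K ≤ n) (x d : α) :
    (∑ k ∈ Finset.Icc 1 K, if x ≤ l.getD (n - k) d then (1 : ℤ) else 0)
      = (min K (l.countP (x ≤ ·)) : ℕ) := by
  subst hn
  rw [← Finset.sum_Icc_one_ite_le_eq_min]
  refine Finset.sum_congr rfl fun k hk => ?_
  obtain ⟨hk1, hkK⟩ := Finset.mem_Icc.1 hk
  rw [getD_eq_getElem _ _ (by omega)]
  exact if_congr (hl.le_getElem_length_sub_iff x hk1 (hkK.trans hK)) rfl rfl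

end SortedLE

end List

theorem autkc_objective_reformulation_general
    (C : ℕ) (s : Fin C → ℝ) (y : Fin C) (K : ℕ)
    (hKC : K ≤ C - 1) :
    (∑ k ∈ Finset.Icc 1 K, if s y ≤ kthLargestDel s y k then (1 : ℤ) else 0)
      = -1 + ∑ k ∈ Finset.Icc 1 (K + 1), if s y ≤ kthLargest s k then (1 : ℤ) else 0 := by
  have hy : (y : ℕ) < (List.ofFn s).length := by simp
  have hdel : (∑ k ∈ Finset.Icc 1 K, if s y ≤ kthLargestDel s y k then (1 : ℤ) else 0)
      = (min K (((List.ofFn s).eraseIdx y).countP (s y ≤ ·)) : ℕ) := by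
    rw [← (List.perm_insertionSort (· ≤ ·) _).countP_eq]
    exact List.sortedLE_insertionSort.sum_Icc_one_ite_le_getD_eq_min
      (by simp [List.length_eraseIdx_of_lt hy]) hKC (s y) 0
  have hfull : (∑ k ∈ Finset.Icc 1 (K + 1), if s y ≤ kthLargest s k then (1 : ℤ) else 0)
      = (min (K + 1) ((List.ofFn s).countP (s y ≤ ·)) : ℕ) := by
    rw [← (List.perm_insertionSort (· ≤ ·) _).countP_eq]
    exact List.sortedLE_insertionSort.sum_Icc_one_ite_le_getD_eq_min (by simp) (by omega) (s y) 0
  rw [hdel, hfull, List.countP_eq_countP_eraseIdx_add_one hy (by simp)]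
  push_cast
  omega

/-- Reformulation of the AUTKC objective (Theorem 2 of the paper):
`Σ_{k=1}^{K} 𝟙[s_y ≤ (s_{∖y})_{[k]}] = −1 + Σ_{k=1}^{K+1} 𝟙[s_y ≤ s_{[k]}]`,
under the worst-case tie-breaking encoded by the non-strict inequalities. -/
theorem autkc_objective_reformulation
    (C : ℕ) (hC : 2 ≤ C) (s : Fin C → ℝ) (y : Fin C) (K : ℕ)
    (hK1 : 1 ≤ K) (hKC : K ≤ C - 1) :
    (∑ k ∈ Finset.Icc 1 K, if s y ≤ kthLargestDel s y k then (1 : ℤ) else 0)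
      = -1 + ∑ k ∈ Finset.Icc 1 (K + 1), if s y ≤ kthLargest s k then (1 : ℤ) else 0 :=
  autkc_objective_reformulation_general C s y K hKC
end

section
/- Let C ≥ 2 and 1 ≤ K ≤ C be integers and let η ∈ ℝ^C be a conditional probability vector with pairwise distinct entries. A score vector s ∈ ℝ^C minimizes the conditional AUTKC risk R_K(·, η) over ℝ^C if and only if s is top-K ranking-preserving with respect to η. -/
open Classical in
/-- The rank of label `y` under the score vector `s`, with worst-case tie-breaking
relative to `η`: `π_s(y) = 1 + |{j : s_j > s_y}| + |{j : s_j = s_y ∧ η_j < η_y}|`. -/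
noncomputable def rankW {C : ℕ} (η s : Fin C → ℝ) (y : Fin C) : ℕ :=
  1 + (Finset.univ.filter fun j => s y < s j).card
    + (Finset.univ.filter fun j => s j = s y ∧ η j < η y).card

/-- The conditional AUTKC risk `R_K(s, η) = (1/K) Σ_y η_y · min{π_s(y) − 1, K}`. -/
noncomputable def condRisk {C : ℕ} (K : ℕ) (η s : Fin C → ℝ) : ℝ :=
  (1 / (K : ℝ)) * ∑ y : Fin C, η y * (min (rankW η s y - 1) K : ℕ)

/-- `s` is top-`K` ranking-preserving w.r.t. `η`: for every label `y` and every
`k ∈ {1,…,K}`, `π_s(y) = k` implies that `η_y` is the `k`-th largest entry of `η`. -/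
def RPK {C : ℕ} (K : ℕ) (η s : Fin C → ℝ) : Prop :=
  ∀ y : Fin C, ∀ k : ℕ, 1 ≤ k → k ≤ K → rankW η s y = k → η y = kthLargest η k

/-!
Order the labels lexicographically by the key `(s_y, -η_y)`. Worst-case tie-breaking makes
`π_s(y) - 1` the number of labels with a larger key, and since `η` is injective the keys are
distinct, so `y ↦ π_s(y) - 1` is a bijection onto `{0, …, C - 1}`. Thus
`K · R_K(s, η) = ∑_y η_y · w(π_s(y) - 1)` with `w(i) = min(i, K)` monotone, and by the
rearrangement inequality this is smallest when the ranks sort `η` decreasingly, e.g. at `s = η`.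
Equality in the rearrangement inequality means that `η` antivaries with the weights, which happens
exactly when every label ranked among the top `K` by `s` gets its rank under `η`: this is top-`K`
ranking preservation.
-/

open Finset Function

section NumGreater

variable {ι α β : Type*} [Fintype ι] [LinearOrder α] [LinearOrder β]

def numGreater (f : ι → α) (y : ι) : ℕ :=
  #{j | f y < f j}

lemma numGreater_lt_numGreater_of_lt {f : ι → α} {y z : ι} (h : f y < f z) :
    numGreater f z < numGreater f y :=
  card_lt_card <| (ssubset_iff_of_subset fun j hj => by simp_all [h.trans]).2
    ⟨z, by simp [h], by simp⟩

lemma numGreater_lt_numGreater_iff {f : ι → α} {y z : ι} :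
    numGreater f y < numGreater f z ↔ f z < f y := by
  refine ⟨fun h => ?_, numGreater_lt_numGreater_of_lt⟩
  by_contra! hle
  rcases hle.lt_or_eq with hlt | heq
  · exact (numGreater_lt_numGreater_of_lt hlt).not_gt h
  · simp [numGreater, heq] at h

lemma numGreater_lt_card (f : ι → α) (y : ι) : numGreater f y < Fintype.card ι :=
  card_lt_univ_of_notMem (x := y) (by simp)

lemma numGreater_injective {f : ι → α} (hf : Injective f) : Injective (numGreater f) :=
  fun _ _ h => hf <| le_antisymm
    (not_lt.1 fun hlt => (numGreater_lt_numGreater_iff.2 hlt).ne h)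
    (not_lt.1 fun hlt => (numGreater_lt_numGreater_iff.2 hlt).ne' h)

lemma card_filter_numGreater_lt (f : ι → α) (y : ι) :
    #{j | numGreater f j < numGreater f y} = numGreater f y := by
  simp only [numGreater_lt_numGreater_iff]
  rfl

noncomputable def numGreaterEquiv {f : ι → α} (hf : Injective f) : ι ≃ Fin (Fintype.card ι) :=
  Equiv.ofBijective (fun y => ⟨numGreater f y, numGreater_lt_card f y⟩)
    ((Fintype.bijective_iff_injective_and_card _).2
      ⟨fun _ _ h => numGreater_injective hf (Fin.val_eq_of_eq h), (Fintype.card_fin _).symm⟩)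

@[simp]
lemma numGreaterEquiv_apply {f : ι → α} (hf : Injective f) (y : ι) :
    (numGreaterEquiv hf y : ℕ) = numGreater f y :=
  rfl

lemma exists_numGreater_eq {f : ι → α} (hf : Injective f) {m : ℕ} (hm : m < Fintype.card ι) :
    ∃ y, numGreater f y = m :=
  ⟨(numGreaterEquiv hf).symm ⟨m, hm⟩, by rw [← numGreaterEquiv_apply hf, Equiv.apply_symm_apply]⟩

lemma exists_perm_numGreater_comp_eq {f : ι → α} {g : ι → β} (hf : Injective f)
    (hg : Injective g) : ∃ σ : Equiv.Perm ι, ∀ y, numGreater f (σ y) = numGreater g y :=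
  ⟨(numGreaterEquiv hg).trans (numGreaterEquiv hf).symm, fun y => by
    rw [← numGreaterEquiv_apply hf, Equiv.trans_apply, Equiv.apply_symm_apply,
      numGreaterEquiv_apply]⟩

end NumGreater

section Rearrangement

variable {ι α : Type*} [Fintype ι] [LinearOrder α] (K : ℕ)

lemma cast_min_lt_cast_min_iff {a b : ℕ} :
    ((min a K : ℕ) : ℝ) < (min b K : ℕ) ↔ a < b ∧ a < K := by
  rw [Nat.cast_lt]
  omega

lemma antivary_min_numGreater (η : ι → ℝ) :
    Antivary η fun y => ((min (numGreater η y) K : ℕ) : ℝ) :=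
  fun _ _ h => (numGreater_lt_numGreater_iff.1 ((cast_min_lt_cast_min_iff K).1 h).1).le

lemma antivary_min_numGreater_comp_perm_iff {η : ι → ℝ} (hη : Injective η)
    (σ : Equiv.Perm ι) :
    Antivary η (fun y => ((min (numGreater η (σ y)) K : ℕ) : ℝ)) ↔
      ∀ y, numGreater η (σ y) < K → σ y = y := by
  simp only [Antivary, cast_min_lt_cast_min_iff]
  constructor
  · intro hA y hy
    -- the labels that `σ` ranks above `y` are exactly those with larger `η`
    have hfilter : ∀ k, numGreater η (σ k) < numGreater η (σ y) ↔ η y < η k := by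
      intro k
      constructor
      · intro hk
        exact (hA ⟨hk, hk.trans hy⟩).lt_of_ne (hη.ne fun h => by simp [h] at hk)
      · intro hk
        by_contra! hle
        rcases hle.lt_or_eq with hlt | heq
        · exact (hA ⟨hlt, hy⟩).not_gt hk
        · exact hk.ne (congrArg η (σ.injective (numGreater_injective hη heq)))
    apply numGreater_injective hη
    calc numGreater η (σ y) = #{k | numGreater η k < numGreater η (σ y)} :=
          (card_filter_numGreater_lt η (σ y)).symm
      _ = #{k | numGreater η (σ k) < numGreater η (σ y)} := card_equiv σ.symm (by simp)
      _ = numGreater η y := by simp only [hfilter]; rfl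
  · rintro hfix i j ⟨hij, hiK⟩
    rw [hfix i hiK] at hij hiK
    by_contra! hlt
    have hji := numGreater_lt_numGreater_iff.2 hlt
    have hj : σ j = j := by
      have := hfix (σ.symm j) (by simpa using hji.trans hiK)
      rw [Equiv.apply_symm_apply] at this
      exact (σ.symm_apply_eq.1 this.symm).symm
    rw [hj] at hij
    exact hij.not_gt hji

lemma sum_mul_min_numGreater_le {η : ι → ℝ} (hη : Injective η) {g : ι → α} (hg : Injective g) :
    ∑ y, η y * ((min (numGreater η y) K : ℕ) : ℝ) ≤
      ∑ y, η y * ((min (numGreater g y) K : ℕ) : ℝ) := by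
  obtain ⟨σ, hσ⟩ := exists_perm_numGreater_comp_eq hη hg
  simp only [← hσ]
  exact (antivary_min_numGreater K η).sum_smul_le_sum_smul_comp_perm

lemma sum_mul_min_numGreater_eq_iff {η : ι → ℝ} (hη : Injective η) {g : ι → α}
    (hg : Injective g) :
    ∑ y, η y * ((min (numGreater g y) K : ℕ) : ℝ) =
        ∑ y, η y * ((min (numGreater η y) K : ℕ) : ℝ) ↔
      ∀ y, numGreater g y < K → numGreater g y = numGreater η y := by
  obtain ⟨σ, hσ⟩ := exists_perm_numGreater_comp_eq hη hg
  simp only [← hσ, (numGreater_injective hη).eq_iff]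
  exact (antivary_min_numGreater K η).sum_smul_comp_perm_eq_sum_smul_iff.trans
    (antivary_min_numGreater_comp_perm_iff K hη σ)

end Rearrangement

section RankKey

variable {ι : Type*}

def rankKey (η s : ι → ℝ) (y : ι) : ℝ ×ₗ ℝᵒᵈ :=
  toLex (s y, OrderDual.toDual (η y))

lemma rankKey_injective {η : ι → ℝ} (hη : Injective η) (s : ι → ℝ) :
    Injective (rankKey η s) :=
  fun _ _ h => hη (Prod.ext_iff.1 (toLex.injective h)).2

lemma rankKey_lt_rankKey_iff {η s : ι → ℝ} {y j : ι} :
    rankKey η s y < rankKey η s j ↔ s y < s j ∨ s j = s y ∧ η j < η y := by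
  simp only [rankKey, Prod.Lex.toLex_lt_toLex, OrderDual.toDual_lt_toDual, eq_comm]

lemma numGreater_rankKey_self [Fintype ι] (η : ι → ℝ) :
    numGreater (rankKey η η) = numGreater η := by
  ext y
  simp only [numGreater, rankKey_lt_rankKey_iff]
  congr 1
  exact filter_congr fun j _ => or_iff_left fun h => h.2.ne h.1

lemma rankW_eq_numGreater_rankKey_add_one {C : ℕ} (η s : Fin C → ℝ) (y : Fin C) :
    rankW η s y = numGreater (rankKey η s) y + 1 := by
  rw [rankW, numGreater, filter_congr fun j _ => rankKey_lt_rankKey_iff, filter_or,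
    card_union_of_disjoint]
  · omega
  · exact disjoint_filter.2 fun j _ hlt heq => hlt.ne' heq.1

end RankKey

section KthLargest

variable {C : ℕ} {η : Fin C → ℝ}

lemma card_filter_eq_countP_ofFn (η : Fin C → ℝ) (p : ℝ → Prop) [DecidablePred p] :
    #{j | p (η j)} = (List.ofFn η).countP (p ·) := by
  rw [← Multiset.coe_countP, ← Fin.univ_val_map, Multiset.countP_map]
  rfl

lemma kthLargest_numGreater_add_one (hη : Injective η) (y : Fin C) :
    kthLargest η (numGreater η y + 1) = η y := by
  set L := (List.ofFn η).insertionSort (· ≤ ·) with hL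
  have hperm : L.Perm (List.ofFn η) := List.perm_insertionSort _ _
  have hsorted : L.Pairwise (· < ·) :=
    ((List.pairwise_insertionSort _ _).and (hperm.nodup_iff.2 (List.nodup_ofFn.2 hη))).imp
      fun h => h.1.lt_of_ne h.2
  obtain ⟨l₁, l₂, hsplit⟩ := List.append_of_mem (hperm.mem_iff.2 (List.mem_ofFn.2 ⟨y, rfl⟩))
  rw [hsplit, List.pairwise_append, List.pairwise_cons] at hsorted
  obtain ⟨-, ⟨hgt, -⟩, hlt⟩ := hsorted
  have hcount : numGreater η y = l₂.length := by
    rw [numGreater, card_filter_eq_countP_ofFn, ← hperm.countP_eq, hsplit, List.countP_append,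
      List.countP_cons, List.countP_eq_zero.2 fun a ha => by simpa using (hlt a ha _ (by simp)).le,
      List.countP_eq_length.2 fun a ha => by simpa using hgt a ha]
    simp
  have hlen : C = l₁.length + l₂.length + 1 := by
    rw [← List.length_ofFn (f := η), ← hperm.length_eq, hsplit]
    simp only [List.length_append, List.length_cons]
    omega
  rw [kthLargest, ← hL, hsplit, hcount, List.getD_append_right _ _ _ _ (by omega)]
  simp [show C - (l₂.length + 1) - l₁.length = 0 by omega]

lemma kthLargest_add_one_eq_iff (hη : Injective η) {m : ℕ} (hm : m < C) (y : Fin C) :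
    kthLargest η (m + 1) = η y ↔ m = numGreater η y := by
  obtain ⟨z, rfl⟩ := exists_numGreater_eq hη (m := m) (by simpa using hm)
  rw [kthLargest_numGreater_add_one hη, hη.eq_iff, (numGreater_injective hη).eq_iff]

end KthLargest

section Risk

variable {C : ℕ} {η : Fin C → ℝ}

lemma rpk_iff_numGreater_rankKey_eq (K : ℕ) (hη : Injective η) (s : Fin C → ℝ) :
    RPK K η s ↔ ∀ y, numGreater (rankKey η s) y < K →
      numGreater (rankKey η s) y = numGreater η y := by
  simp only [RPK, rankW_eq_numGreater_rankKey_add_one]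
  refine ⟨fun h y hy => ?_, ?_⟩
  · have hlt : numGreater (rankKey η s) y < C := by
      simpa using numGreater_lt_card (rankKey η s) y
    exact (kthLargest_add_one_eq_iff hη hlt y).1 (h y _ le_add_self hy rfl).symm
  · rintro h y k - hk rfl
    rw [h y hk, kthLargest_numGreater_add_one hη]

lemma condRisk_eq_sum (K : ℕ) (η s : Fin C → ℝ) :
    condRisk K η s = 1 / K * ∑ y, η y * ((min (numGreater (rankKey η s) y) K : ℕ) : ℝ) := by
  simp only [condRisk, rankW_eq_numGreater_rankKey_add_one, Nat.add_sub_cancel]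

lemma condRisk_self_le (K : ℕ) (hη : Injective η) (s : Fin C → ℝ) :
    condRisk K η η ≤ condRisk K η s := by
  rw [condRisk_eq_sum, condRisk_eq_sum, numGreater_rankKey_self]
  exact mul_le_mul_of_nonneg_left (sum_mul_min_numGreater_le K hη (rankKey_injective hη s))
    (by positivity)

lemma condRisk_eq_condRisk_self_iff {K : ℕ} (hK : 0 < K) (hη : Injective η) (s : Fin C → ℝ) :
    condRisk K η s = condRisk K η η ↔ ∀ y, numGreater (rankKey η s) y < K →
      numGreater (rankKey η s) y = numGreater η y := by
  rw [condRisk_eq_sum, condRisk_eq_sum, numGreater_rankKey_self,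
    mul_right_inj' (by positivity), sum_mul_min_numGreater_eq_iff K hη (rankKey_injective hη s)]

end Risk

theorem autkc_bayes_optimal_iff_ranking_preserving_general
    (C K : ℕ) (hK1 : 1 ≤ K)
    (η : Fin C → ℝ)
    (hdist : Function.Injective η) (s : Fin C → ℝ) :
    (∀ s' : Fin C → ℝ, condRisk K η s ≤ condRisk K η s') ↔ RPK K η s := by
  have hmin : (∀ s', condRisk K η s ≤ condRisk K η s') ↔ condRisk K η s = condRisk K η η :=
    ⟨fun h => (h η).antisymm (condRisk_self_le K hdist s),
      fun h s' => h ▸ condRisk_self_le K hdist s'⟩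
  rw [hmin, condRisk_eq_condRisk_self_iff hK1 hdist, rpk_iff_numGreater_rankKey_eq K hdist]

/-- AUTKC Bayes optimality (Theorem 4 of the paper): a score vector `s` minimizes the
conditional AUTKC risk `R_K(·, η)` over `ℝ^C` if and only if `s` is top-`K`
ranking-preserving with respect to `η`. -/
theorem autkc_bayes_optimal_iff_ranking_preserving
    (C K : ℕ) (hC : 2 ≤ C) (hK1 : 1 ≤ K) (hKC : K ≤ C)
    (η : Fin C → ℝ) (hnn : ∀ y, 0 ≤ η y) (hsum : ∑ y : Fin C, η y = 1)
    (hdist : Function.Injective η) (s : Fin C → ℝ) :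
    (∀ s' : Fin C → ℝ, condRisk K η s ≤ condRisk K η s') ↔ RPK K η s :=
  autkc_bayes_optimal_iff_ranking_preserving_general C K hK1 η hdist s
end

section
/- Let C ≥ 2 and 1 ≤ K ≤ C be integers and let η ∈ ℝ^C be a conditional probability vector with pairwise distinct entries. If s ∈ ℝ^C is top-K ranking-preserving with respect to η, then R_K(s, η) = (1/K) Σ_{k=1}^{C} min{k−1, K} · η_{[k]}, where η_{[k]} is the k-th largest entry of η; in particular this value is the minimum of R_K(·, η) over ℝ^C. -/
/-!
With distinct `η`, worst-case tie-breaking ranks labels by the lexicographic key `(-s_y, η_y)`,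
which is injective, so `σ : y ↦ π_s(y) - 1` is a permutation of `{0, …, C-1}` and
`K · R_K(s, η) = Σ_i η_{σ⁻¹ i} · min{i, K}`. Writing `min{i, K} = K - (K - i)₊`, this sum only
depends on the total mass and on the labels placed at positions `i < K`, which ranking
preservation pins to `η_[i+1]`. By the rearrangement inequality the decreasing arrangement of `η`
minimises the sum against the monotone weights `min{i, K}`.
-/

open Finset

section StrictRank

variable {ι β : Type*} [Fintype ι] [LinearOrder β] (f : ι → β)

def strictRank (y : ι) : ℕ := #{j | f j < f y}

theorem strictRank_lt_card (y : ι) : strictRank f y < Fintype.card ι :=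
  card_lt_univ_of_notMem (x := y) (by simp)

variable {f} in
theorem strictRank_lt_strictRank {y z : ι} (h : f y < f z) : strictRank f y < strictRank f z :=
  card_lt_card <| ssubset_iff_of_subset (by intro j; simpa using fun hj => hj.trans h) |>.mpr
    ⟨y, by simpa using h, by simp⟩

variable {f} in
theorem strictRank_injective (hf : Function.Injective f) : Function.Injective (strictRank f) := by
  intro y z hyz
  by_contra hne
  rcases (hf.ne hne).lt_or_gt with h | h
  · exact (strictRank_lt_strictRank h).ne hyz
  · exact (strictRank_lt_strictRank h).ne' hyz

end StrictRank

noncomputable def rankEquiv {n : ℕ} {β : Type*} [LinearOrder β] {f : Fin n → β}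
    (hf : Function.Injective f) : Equiv.Perm (Fin n) :=
  Equiv.ofBijective (fun y => ⟨strictRank f y, by simpa using strictRank_lt_card f y⟩)
    (Finite.injective_iff_bijective.mp fun _ _ h => strictRank_injective hf (Fin.val_eq_of_eq h))

theorem rankEquiv_val {n : ℕ} {β : Type*} [LinearOrder β] {f : Fin n → β}
    (hf : Function.Injective f) (y : Fin n) : (rankEquiv hf y : ℕ) = strictRank f y := rfl

def scoreKey {C : ℕ} (η s : Fin C → ℝ) (y : Fin C) : ℝᵒᵈ ×ₗ ℝ :=
  toLex (OrderDual.toDual (s y), η y)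

theorem scoreKey_lt_iff {C : ℕ} (η s : Fin C → ℝ) (j y : Fin C) :
    scoreKey η s j < scoreKey η s y ↔ s y < s j ∨ s j = s y ∧ η j < η y := by
  simp [scoreKey, Prod.Lex.toLex_lt_toLex]

theorem scoreKey_injective {C : ℕ} {η : Fin C → ℝ} (hη : Function.Injective η) (s : Fin C → ℝ) :
    Function.Injective (scoreKey η s) :=
  fun _ _ h => hη (Prod.ext_iff.mp (toLex.injective h)).2

theorem rankW_eq {C : ℕ} (η s : Fin C → ℝ) (y : Fin C) :
    rankW η s y = 1 + strictRank (scoreKey η s) y := by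
  classical
  rw [rankW, add_assoc, strictRank]
  simp_rw [scoreKey_lt_iff]
  rw [filter_or, card_union_of_disjoint (disjoint_filter.mpr fun j _ h₁ h₂ => h₁.ne' h₂.1)]

section Sorting

variable {C : ℕ} (η : Fin C → ℝ)

theorem insertionSort_ofFn : (List.ofFn η).insertionSort (· ≤ ·) = List.ofFn (η ∘ Tuple.sort η) :=
  List.Perm.eq_of_sortedLE (List.sortedLE_insertionSort (l := List.ofFn η))
    (Tuple.monotone_sort η).sortedLE_ofFn
    (((List.ofFn η).perm_insertionSort _).trans ((Tuple.sort η).ofFn_comp_perm η).symm)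

noncomputable def sortDesc : Equiv.Perm (Fin C) := Fin.revPerm.trans (Tuple.sort η)

theorem antitone_comp_sortDesc : Antitone (η ∘ sortDesc η) :=
  (Tuple.monotone_sort η).comp_antitone Fin.rev_anti

theorem kthLargest_succ (i : Fin C) : kthLargest η (i + 1) = η (sortDesc η i) := by
  rw [kthLargest, insertionSort_ofFn,
    List.getD_eq_getElem _ _ (by simp only [List.length_ofFn]; omega)]
  simp [sortDesc, Fin.rev]

end Sorting

theorem sum_comp_sortDesc_mul_le {C : ℕ} (η : Fin C → ℝ) {c : Fin C → ℝ} (hc : Monotone c)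
    (σ : Equiv.Perm (Fin C)) : ∑ i, η (sortDesc η i) * c i ≤ ∑ i, η (σ i) * c i := by
  simpa using ((antitone_comp_sortDesc η).antivary hc).sum_mul_le_sum_comp_perm_mul
    (σ := σ.trans (sortDesc η).symm)

theorem sum_mul_min_eq {C K : ℕ} {φ ψ : Fin C → ℝ} (hsum : ∑ i, φ i = ∑ i, ψ i)
    (h : ∀ i : Fin C, (i : ℕ) < K → φ i = ψ i) :
    ∑ i, φ i * ((min (i : ℕ) K : ℕ) : ℝ) = ∑ i, ψ i * ((min (i : ℕ) K : ℕ) : ℝ) := by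
  have hmin (i : Fin C) : ((min (i : ℕ) K : ℕ) : ℝ) = K - ((K - i : ℕ) : ℝ) := by
    rw [eq_sub_iff_add_eq, ← Nat.cast_add]
    congr 1
    omega
  have hsplit (χ : Fin C → ℝ) : ∑ i, χ i * ((min (i : ℕ) K : ℕ) : ℝ)
      = (∑ i, χ i) * K - ∑ i, χ i * ((K - i : ℕ) : ℝ) := by
    simp_rw [hmin, sum_mul, ← sum_sub_distrib, mul_sub]
  rw [hsplit, hsplit, hsum]
  congr 1
  refine sum_congr rfl fun i _ => ?_
  rcases lt_or_ge (i : ℕ) K with hi | hi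
  · rw [h i hi]
  · simp [Nat.sub_eq_zero_of_le hi]

section Risk

variable {C : ℕ} {η : Fin C → ℝ} (hη : Function.Injective η) (s : Fin C → ℝ)

theorem rankW_rankEquiv_symm (i : Fin C) :
    rankW η s ((rankEquiv (scoreKey_injective hη s)).symm i) = i + 1 := by
  rw [rankW_eq, ← rankEquiv_val (scoreKey_injective hη s), Equiv.apply_symm_apply, add_comm]

theorem condRisk_eq_sum_rankEquiv (K : ℕ) :
    condRisk K η s = (1 / (K : ℝ)) *
      ∑ i, η ((rankEquiv (scoreKey_injective hη s)).symm i) * ((min (i : ℕ) K : ℕ) : ℝ) := by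
  rw [condRisk, ← (rankEquiv (scoreKey_injective hη s)).symm.sum_comp]
  congr 2 with i
  rw [rankW_rankEquiv_symm hη s i, Nat.add_sub_cancel]

end Risk

theorem sum_Icc_min_mul_kthLargest {C : ℕ} (K : ℕ) (η : Fin C → ℝ) :
    ∑ k ∈ Icc 1 C, ((min (k - 1) K : ℕ) : ℝ) * kthLargest η k
      = ∑ i, η (sortDesc η i) * ((min (i : ℕ) K : ℕ) : ℝ) := by
  rw [← Ico_add_one_right_eq_Icc, sum_Ico_eq_sum_range, ← Fin.sum_univ_eq_sum_range]
  refine sum_congr rfl fun i _ => ?_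
  rw [mul_comm, add_comm 1, kthLargest_succ, Nat.add_sub_cancel]

theorem autkc_optimal_risk_value_general
    (C K : ℕ)
    (η : Fin C → ℝ)
    (hdist : Function.Injective η) (s : Fin C → ℝ) (hRP : RPK K η s) :
    condRisk K η s
        = (1 / (K : ℝ)) * ∑ k ∈ Finset.Icc 1 C, (min (k - 1) K : ℕ) * kthLargest η k ∧
    ∀ s' : Fin C → ℝ, condRisk K η s ≤ condRisk K η s' := by
  have hopt : condRisk K η s
      = (1 / (K : ℝ)) * ∑ i, η (sortDesc η i) * ((min (i : ℕ) K : ℕ) : ℝ) := by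
    rw [condRisk_eq_sum_rankEquiv hdist]
    congr 1
    refine sum_mul_min_eq (by simp only [Equiv.sum_comp]) fun i hi => ?_
    rw [← kthLargest_succ η i]
    exact hRP _ _ (by omega) hi (rankW_rankEquiv_symm hdist s i)
  refine ⟨by rw [hopt, sum_Icc_min_mul_kthLargest], fun s' => ?_⟩
  rw [hopt, condRisk_eq_sum_rankEquiv hdist]
  refine mul_le_mul_of_nonneg_left ?_ (by positivity)
  exact sum_comp_sortDesc_mul_le η (fun _ _ hij => by gcongr; exact hij) _

/-- Value of the optimal conditional AUTKC risk: if `s` is top-`K` ranking-preserving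
w.r.t. `η`, then `R_K(s, η) = (1/K) Σ_{k=1}^{C} min{k−1, K} · η_{[k]}`, and this value
is the minimum of `R_K(·, η)` over `ℝ^C`. -/
theorem autkc_optimal_risk_value
    (C K : ℕ) (hC : 2 ≤ C) (hK1 : 1 ≤ K) (hKC : K ≤ C)
    (η : Fin C → ℝ) (hnn : ∀ y, 0 ≤ η y) (hsum : ∑ y : Fin C, η y = 1)
    (hdist : Function.Injective η) (s : Fin C → ℝ) (hRP : RPK K η s) :
    condRisk K η s
        = (1 / (K : ℝ)) * ∑ k ∈ Finset.Icc 1 C, (min (k - 1) K : ℕ) * kthLargest η k ∧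
    ∀ s' : Fin C → ℝ, condRisk K η s ≤ condRisk K η s' :=
  autkc_optimal_risk_value_general C K η hdist s hRP
end

section
/- Let C ≥ 2 and 1 ≤ K ≤ C−1 be integers, let ℓ : ℝ → ℝ be strictly decreasing, let η ∈ ℝ^C, and let y1 ≠ y2 be labels with η_{y1} > η_{y2}. Let s ∈ ℝ^C satisfy s_{y1} > s_{y2}, and let s' ∈ ℝ^C be obtained from s by swapping its y1-th and y2-th coordinates. Then K·(R_K^ℓ(s, η) − R_K^ℓ(s', η)) = (η_{y1} − η_{y2}) · Σ_{k=1}^{K+1} [ℓ(s_{y1} − s_[k]) − ℓ(s_{y2} − s_[k])]; in particular R_K^ℓ(s, η) < R_K^ℓ(s', η). -/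
/-- The conditional surrogate AUTKC risk
`R_K^ℓ(s, η) = Σ_y η_y · (1/K) Σ_{k=1}^{K+1} ℓ(s_y − s_[k])`. -/
noncomputable def surrRisk {C : ℕ} (K : ℕ) (ℓ : ℝ → ℝ) (η s : Fin C → ℝ) : ℝ :=
  ∑ y : Fin C, η y * ((1 / (K : ℝ)) *
    ∑ k ∈ Finset.Icc 1 (K + 1), ℓ (s y - kthLargest s k))

/-!
Swapping two coordinates of `s` leaves every order statistic `s_[k]` unchanged, so in the
risk only the two summands of `y1` and `y2` change: their loss profiles are exchanged. Hence
`K (R(s) − R(s')) = (η_{y1} − η_{y2}) Σ_k [ℓ(s_{y1} − s_[k]) − ℓ(s_{y2} − s_[k])]`, a positive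
factor times a sum of negative terms since `ℓ` is strictly decreasing.
-/

open Finset

theorem insertionSort_le_eq_of_perm {α : Type*} [LinearOrder α] {l₁ l₂ : List α}
    (h : l₁.Perm l₂) : l₁.insertionSort (· ≤ ·) = l₂.insertionSort (· ≤ ·) :=
  List.Perm.eq_of_pairwise' (List.pairwise_insertionSort _ _) (List.pairwise_insertionSort _ _)
    (((List.perm_insertionSort _ _).trans h).trans (List.perm_insertionSort _ _).symm)

theorem kthLargest_comp_perm {C : ℕ} (s : Fin C → ℝ) (σ : Equiv.Perm (Fin C)) (k : ℕ) :
    kthLargest (s ∘ σ) k = kthLargest s k := by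
  rw [kthLargest, kthLargest, insertionSort_le_eq_of_perm (σ.ofFn_comp_perm s)]

theorem sum_mul_sub_sum_mul_comp_swap {ι R : Type*} [Fintype ι] [DecidableEq ι] [CommRing R]
    (f g : ι → R) (i j : ι) :
    ∑ x, f x * g x - ∑ x, f x * g (Equiv.swap i j x) = (f i - f j) * (g i - g j) := by
  obtain rfl | hij := eq_or_ne i j
  · simp
  rw [← sum_sub_distrib, Fintype.sum_eq_add i j hij fun x hx => ?_]
  · simp only [Equiv.swap_apply_left, Equiv.swap_apply_right]
    ring
  · rw [Equiv.swap_apply_of_ne_of_ne hx.1 hx.2, sub_self]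

theorem surrRisk_sub_surrRisk_comp_swap {C K : ℕ} (hK : K ≠ 0) (ℓ : ℝ → ℝ) (η s : Fin C → ℝ)
    (i j : Fin C) :
    (K : ℝ) * (surrRisk K ℓ η s - surrRisk K ℓ η (s ∘ Equiv.swap i j))
      = (η i - η j) * ∑ k ∈ Icc 1 (K + 1),
          (ℓ (s i - kthLargest s k) - ℓ (s j - kthLargest s k)) := by
  simp only [surrRisk, kthLargest_comp_perm, Function.comp_apply]
  rw [sum_mul_sub_sum_mul_comp_swap, sum_sub_distrib]
  field_simp

theorem sum_loss_sub_loss_neg {ι : Type*} {ℓ : ℝ → ℝ} (hℓ : StrictAnti ℓ) {a b : ℝ} (hab : b < a)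
    (t : ι → ℝ) {S : Finset ι} (hS : S.Nonempty) :
    ∑ k ∈ S, (ℓ (a - t k) - ℓ (b - t k)) < 0 :=
  sum_neg (fun k _ => sub_neg.mpr (hℓ (sub_lt_sub_right hab (t k)))) hS

theorem surrogate_risk_swap_general
    (C K : ℕ) (hK1 : 1 ≤ K)
    (ℓ : ℝ → ℝ) (hanti : StrictAnti ℓ)
    (η : Fin C → ℝ) (y1 y2 : Fin C) (hη : η y2 < η y1)
    (s s' : Fin C → ℝ) (hs : s y2 < s y1)
    (hswap : s' = s ∘ (Equiv.swap y1 y2)) :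
    (K : ℝ) * (surrRisk K ℓ η s - surrRisk K ℓ η s')
        = (η y1 - η y2) * ∑ k ∈ Finset.Icc 1 (K + 1),
            (ℓ (s y1 - kthLargest s k) - ℓ (s y2 - kthLargest s k)) ∧
    surrRisk K ℓ η s < surrRisk K ℓ η s' := by
  subst hswap
  have hK : 0 < K := hK1
  have hdiff := surrRisk_sub_surrRisk_comp_swap hK.ne' ℓ η s y1 y2
  refine ⟨hdiff, sub_neg.mp (neg_of_mul_neg_right ?_ (Nat.cast_nonneg K))⟩
  rw [hdiff]
  exact mul_neg_of_pos_of_neg (sub_pos.mpr hη)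
    (sum_loss_sub_loss_neg hanti hs _ ⟨1, mem_Icc.mpr ⟨le_rfl, Nat.le_add_left 1 K⟩⟩)

/-- The swap identity in the consistency proof: if `η_{y1} > η_{y2}`, `s_{y1} > s_{y2}`,
and `s'` is obtained from `s` by swapping its `y1`-th and `y2`-th coordinates, then
`K·(R_K^ℓ(s, η) − R_K^ℓ(s', η))
  = (η_{y1} − η_{y2}) · Σ_{k=1}^{K+1} [ℓ(s_{y1} − s_[k]) − ℓ(s_{y2} − s_[k])]`,
and in particular `R_K^ℓ(s, η) < R_K^ℓ(s', η)`. -/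
theorem surrogate_risk_swap
    (C K : ℕ) (hC : 2 ≤ C) (hK1 : 1 ≤ K) (hKC : K + 1 ≤ C)
    (ℓ : ℝ → ℝ) (hanti : StrictAnti ℓ)
    (η : Fin C → ℝ) (y1 y2 : Fin C) (hy : y1 ≠ y2) (hη : η y2 < η y1)
    (s s' : Fin C → ℝ) (hs : s y2 < s y1)
    (hswap : s' = s ∘ (Equiv.swap y1 y2)) :
    (K : ℝ) * (surrRisk K ℓ η s - surrRisk K ℓ η s')
        = (η y1 - η y2) * ∑ k ∈ Finset.Icc 1 (K + 1),
            (ℓ (s y1 - kthLargest s k) - ℓ (s y2 - kthLargest s k)) ∧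
    surrRisk K ℓ η s < surrRisk K ℓ η s' :=
  surrogate_risk_swap_general C K hK1 ℓ hanti η y1 y2 hη s s' hs hswap
end

section
/- Let C and K be integers with 1 ≤ K ≤ C−2, and let η ∈ ℝ^C be a conditional probability vector with η_1 > η_2 > ⋯ > η_C and Σ_{y=K+2}^{C} η_y > K/(K+1). Let R_K^{hinge} be the conditional surrogate AUTKC risk for the hinge loss ℓ_{hinge}(t) := max{0, 1−t}. Let s* ∈ ℝ^C satisfy s*_1 > s*_2 > ⋯ > s*_{K+1} and s*_{K+1} ≥ s*_j for all j ≥ K+2 (so s* is top-K ranking-preserving with respect to η), and define s ∈ ℝ^C by s_i := s*_{K+1} for 1 ≤ i ≤ K+1 and s_i := s*_i for i ≥ K+2. Then s is not top-K ranking-preserving with respect to η, yet R_K^{hinge}(s, η) < R_K^{hinge}(s*, η). Hence the hinge loss is not AUTKC consistent under this condition on η. -/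
/-- The hinge loss `ℓ_hinge(t) = [1 − t]_+`. -/
noncomputable def hingeLoss (t : ℝ) : ℝ := max 0 (1 - t)

open Finset

namespace List

theorem countP_ofFn {α : Type*} {n : ℕ} (s : Fin n → α) (P : α → Prop) [DecidablePred P] :
    (ofFn s).countP (fun a => decide (P a)) = #{i | P (s i)} := by
  rw [← Multiset.coe_countP, ← Fin.univ_val_map, Multiset.countP_map]
  rfl

variable {α : Type*} [LinearOrder α] {L : List α}

theorem SortedLE.length_sub_le_countP_lt (hL : L.SortedLE) {x : α} {p : ℕ}
    (hp : p < L.length) (hx : x < L[p]) :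
    L.length - p ≤ L.countP (fun a => decide (x < a)) := by
  have hdrop : (L.drop p).countP (fun a => decide (x < a)) = L.length - p := by
    rw [countP_eq_length.mpr, length_drop]
    intro a ha
    obtain ⟨j, hj, rfl⟩ := mem_iff_getElem.mp ha
    simpa using hx.trans_le (hL.getElem_le_getElem_of_le (by omega))
  exact hdrop ▸ (drop_sublist p L).countP_le

theorem SortedLE.succ_le_countP_gt (hL : L.SortedLE) {x : α} {p : ℕ}
    (hp : p < L.length) (hx : L[p] < x) :
    p + 1 ≤ L.countP (fun a => decide (a < x)) := by
  have htake : (L.take (p + 1)).countP (fun a => decide (a < x)) = p + 1 := by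
    rw [countP_eq_length.mpr, length_take, min_eq_left hp]
    intro a ha
    obtain ⟨j, hj, rfl⟩ := mem_iff_getElem.mp ha
    simp only [length_take] at hj
    simpa using (hL.getElem_le_getElem_of_le (by omega)).trans_lt hx
  exact htake ▸ (take_sublist (p + 1) L).countP_le

end List

section KthLargest

variable {C : ℕ} (s : Fin C → ℝ)

theorem kthLargest_eq_of_card {k : ℕ} (hk : 1 ≤ k) (hkC : k ≤ C) {x : ℝ}
    (habove : #{i | x < s i} < k) (hbelow : #{i | s i < x} ≤ C - k) :
    kthLargest s k = x := by
  set L := (List.ofFn s).insertionSort (· ≤ ·)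
  have hperm : L.Perm (List.ofFn s) := List.perm_insertionSort _ _
  have hsorted : L.SortedLE := List.sortedLE_insertionSort
  have hp : C - k < L.length := by rw [hperm.length_eq, List.length_ofFn]; omega
  rw [kthLargest, List.getD_eq_getElem _ _ hp]
  apply le_antisymm
  · by_contra! h
    have := hsorted.length_sub_le_countP_lt hp h
    rw [hperm.countP_eq, List.countP_ofFn s (x < ·), hperm.length_eq, List.length_ofFn] at this
    omega
  · by_contra! h
    have := hsorted.succ_le_countP_gt hp h
    rw [hperm.countP_eq, List.countP_ofFn s (· < x)] at this
    omega

theorem kthLargest_eq_of_forall_le {x : ℝ} (hle : ∀ i, s i ≤ x) {k : ℕ} (hk : 1 ≤ k)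
    (hcard : k ≤ #{i | s i = x}) : kthLargest s k = x := by
  have hkC : k ≤ C := hcard.trans ((card_le_univ _).trans_eq (Fintype.card_fin C))
  refine kthLargest_eq_of_card s hk hkC ?_ ?_
  · rw [filter_false_of_mem fun i _ => not_lt.mpr (hle i), card_empty]
    omega
  · have hsplit := card_filter_add_card_filter_not (s := univ) (fun i => s i = x)
    rw [filter_congr fun i _ => (hle i).lt_iff_ne]
    simp only [ne_eq]
    simp only [card_univ, Fintype.card_fin] at hsplit
    omega

theorem kthLargest_succ_eq_of_pivot (i : Fin C) (hbefore : ∀ j < i, s i ≤ s j)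
    (hafter : ∀ j, i < j → s j ≤ s i) : kthLargest s (i + 1) = s i := by
  refine kthLargest_eq_of_card s (by omega) i.isLt ?_ ?_
  · have hsub : ({j | s i < s j} : Finset (Fin C)) ⊆ Iio i := by
      intro j hj
      rw [mem_filter] at hj
      rw [mem_Iio]
      by_contra! hij
      rcases hij.eq_or_lt with rfl | hij
      · exact hj.2.false
      · exact (hj.2.trans_le (hafter j hij)).false
    have := card_le_card hsub
    rw [Fin.card_Iio] at this
    omega
  · have hsub : ({j | s j < s i} : Finset (Fin C)) ⊆ Ioi i := by
      intro j hj
      rw [mem_filter] at hj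
      rw [mem_Ioi]
      by_contra! hji
      rcases hji.eq_or_lt with rfl | hji
      · exact hj.2.false
      · exact (hj.2.trans_le (hbefore j hji)).false
    have := card_le_card hsub
    rw [Fin.card_Ioi] at this
    omega

end KthLargest

theorem rankW_eq_one {C : ℕ} {η s : Fin C → ℝ} {y : Fin C} (hmax : ∀ j, s j ≤ s y)
    (hmin : ∀ j, s j = s y → η y ≤ η j) : rankW η s y = 1 := by
  rw [rankW, filter_false_of_mem fun j _ => not_lt.mpr (hmax j),
    filter_false_of_mem fun j _ hj => (hmin j hj.1).not_gt hj.2]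
  rfl

theorem not_RPK_of_tie_at_max {C K : ℕ} (hK : 1 ≤ K) {η s : Fin C → ℝ}
    (hη : Function.Injective η) {a b : Fin C} (hab : a ≠ b) (ha : ∀ j, s j ≤ s a)
    (hb : s b = s a) : ¬ RPK K η s := by
  intro hRP
  obtain ⟨y, hy, hymin⟩ := exists_min_image ({j | s j = s a} : Finset (Fin C)) η
    ⟨a, by simp⟩
  obtain ⟨z, -, hzmax⟩ := exists_max_image univ η ⟨a, mem_univ a⟩
  rw [mem_filter] at hy
  have hrank : rankW η s y = 1 :=
    rankW_eq_one (fun j => hy.2 ▸ ha j) fun j hj => hymin j (by simp [hj, hy.2])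
  have hyz : η y = η z := by
    rw [hRP y 1 le_rfl hK hrank]
    exact kthLargest_eq_of_forall_le η (fun j => hzmax j (mem_univ j)) le_rfl
      (card_pos.mpr ⟨z, by simp⟩)
  have hηa : η a = η y := le_antisymm (hyz ▸ hzmax a (mem_univ a)) (hymin a (by simp))
  have hηb : η b = η y := le_antisymm (hyz ▸ hzmax b (mem_univ b)) (hymin b (by simp [hb]))
  exact hab (hη (hηa.trans hηb.symm))

theorem surrRisk_mono_loss {C K : ℕ} {ℓ ℓ' : ℝ → ℝ} (hℓ : ∀ t, ℓ t ≤ ℓ' t) {η : Fin C → ℝ}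
    (hη : ∀ y, 0 ≤ η y) (s : Fin C → ℝ) : surrRisk K ℓ η s ≤ surrRisk K ℓ' η s := by
  unfold surrRisk
  gcongr with y _ k _
  · exact hη y
  · exact hℓ _

theorem surrRisk_hingeLoss_eq {C K : ℕ} (η : Fin C → ℝ) {s : Fin C → ℝ}
    (h : ∀ y, ∀ k ∈ Icc 1 (K + 1), s y - kthLargest s k ≤ 1) :
    surrRisk K hingeLoss η s = surrRisk K (fun t => 1 - t) η s := by
  unfold surrRisk
  refine sum_congr rfl fun y _ => ?_
  congr 2
  exact sum_congr rfl fun k hk => max_eq_right (sub_nonneg.mpr (h y k hk))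

theorem surrRisk_one_sub_eq {C K : ℕ} {η : Fin C → ℝ} (hsum : ∑ y, η y = 1) (s : Fin C → ℝ) :
    surrRisk K (fun t => 1 - t) η s
      = ((K + 1) * (1 - ∑ y, η y * s y) + ∑ k ∈ Icc 1 (K + 1), kthLargest s k) / K := by
  have hinner : ∀ y, ∑ k ∈ Icc 1 (K + 1), (1 - (s y - kthLargest s k))
      = (K + 1) * (1 - s y) + ∑ k ∈ Icc 1 (K + 1), kthLargest s k := by
    intro y
    simp only [sub_sub_eq_add_sub, sum_sub_distrib, sum_add_distrib, sum_const,
      Nat.card_Icc, nsmul_eq_mul]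
    push_cast
    ring
  set S := ∑ k ∈ Icc 1 (K + 1), kthLargest s k
  have hterm : ∀ y, η y * (1 / (K : ℝ) * ((K + 1) * (1 - s y) + S))
      = (K + 1) / K * η y - (K + 1) / K * (η y * s y) + S / K * η y := fun y => by ring
  simp only [surrRisk, hinner, hterm, sum_add_distrib, sum_sub_distrib, ← mul_sum, hsum]
  ring

namespace TopKCollapse

-- Labels are `0`-indexed: `⟨K, hK⟩` is the paper's label `K + 1`, and `Iic ⟨K, hK⟩` holds the
-- paper's labels `1, …, K + 1`.

variable {C K : ℕ} (hK : K < C) {sstar s : Fin C → ℝ}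

theorem mem_Iic_mk (i : Fin C) : i ∈ Iic (⟨K, hK⟩ : Fin C) ↔ (i : ℕ) ≤ K := mem_Iic

theorem pivot_le_of_le (h1 : ∀ i j : Fin C, i < j → (j : ℕ) ≤ K → sstar j < sstar i)
    {i : Fin C} (hi : (i : ℕ) ≤ K) : sstar ⟨K, hK⟩ ≤ sstar i := by
  rcases hi.eq_or_lt with hiK | hiK
  · exact le_of_eq (congrArg sstar (Fin.ext hiK.symm))
  · exact (h1 i ⟨K, hK⟩ hiK le_rfl).le

theorem le_pivot (h2 : ∀ j : Fin C, K + 1 ≤ (j : ℕ) → sstar j ≤ sstar ⟨K, hK⟩)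
    (hs : ∀ i : Fin C, s i = if (i : ℕ) ≤ K then sstar ⟨K, hK⟩ else sstar i) (i : Fin C) :
    s i ≤ sstar ⟨K, hK⟩ := by
  rw [hs i]
  split_ifs with hi
  · exact le_rfl
  · exact h2 i (by omega)

theorem kthLargest_eq_pivot (h2 : ∀ j : Fin C, K + 1 ≤ (j : ℕ) → sstar j ≤ sstar ⟨K, hK⟩)
    (hs : ∀ i : Fin C, s i = if (i : ℕ) ≤ K then sstar ⟨K, hK⟩ else sstar i)
    {k : ℕ} (hk : k ∈ Icc 1 (K + 1)) : kthLargest s k = sstar ⟨K, hK⟩ := by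
  rw [mem_Icc] at hk
  refine kthLargest_eq_of_forall_le s (le_pivot hK h2 hs) hk.1 ?_
  have hsub : Iic (⟨K, hK⟩ : Fin C) ⊆ univ.filter fun i => s i = sstar ⟨K, hK⟩ := by
    intro i hi
    simp [hs i, (mem_Iic_mk hK i).mp hi]
  have := card_le_card hsub
  rw [Fin.card_Iic, Fin.val_mk] at this
  omega

theorem kthLargest_succ_eq (h1 : ∀ i j : Fin C, i < j → (j : ℕ) ≤ K → sstar j < sstar i)
    (h2 : ∀ j : Fin C, K + 1 ≤ (j : ℕ) → sstar j ≤ sstar ⟨K, hK⟩)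
    {i : Fin C} (hi : (i : ℕ) ≤ K) : kthLargest sstar (i + 1) = sstar i := by
  refine kthLargest_succ_eq_of_pivot sstar i (fun j hj => (h1 j i hj hi).le) fun j hj => ?_
  by_cases hjK : (j : ℕ) ≤ K
  · exact (h1 i j hj hjK).le
  · exact (h2 j (by omega)).trans (pivot_le_of_le hK h1 hi)

theorem sum_kthLargest_eq_sum_Iic (h1 : ∀ i j : Fin C, i < j → (j : ℕ) ≤ K → sstar j < sstar i)
    (h2 : ∀ j : Fin C, K + 1 ≤ (j : ℕ) → sstar j ≤ sstar ⟨K, hK⟩) :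
    ∑ k ∈ Icc 1 (K + 1), kthLargest sstar k = ∑ i ∈ Iic (⟨K, hK⟩ : Fin C), sstar i := by
  symm
  refine sum_bij (fun i _ => (i : ℕ) + 1) (fun i hi => ?_) (fun i _ j _ hij => ?_)
    (fun k hk => ?_) (fun i hi => ?_)
  · rw [mem_Iic_mk] at hi
    rw [mem_Icc]
    omega
  · exact Fin.ext (by omega)
  · rw [mem_Icc] at hk
    exact ⟨⟨k - 1, by omega⟩, (mem_Iic_mk hK _).mpr (by dsimp; omega), by dsimp; omega⟩
  · exact (kthLargest_succ_eq hK h1 h2 ((mem_Iic_mk hK i).mp hi)).symm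

theorem sum_kthLargest_sub_sum_kthLargest
    (h1 : ∀ i j : Fin C, i < j → (j : ℕ) ≤ K → sstar j < sstar i)
    (h2 : ∀ j : Fin C, K + 1 ≤ (j : ℕ) → sstar j ≤ sstar ⟨K, hK⟩)
    (hs : ∀ i : Fin C, s i = if (i : ℕ) ≤ K then sstar ⟨K, hK⟩ else sstar i) :
    ∑ k ∈ Icc 1 (K + 1), kthLargest sstar k - ∑ k ∈ Icc 1 (K + 1), kthLargest s k
      = ∑ i ∈ Iic (⟨K, hK⟩ : Fin C), (sstar i - sstar ⟨K, hK⟩) := by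
  rw [sum_kthLargest_eq_sum_Iic hK h1 h2,
    sum_congr rfl fun k hk => kthLargest_eq_pivot hK h2 hs hk]
  simp only [sum_sub_distrib, sum_const, Nat.card_Icc, Fin.card_Iic, Nat.add_sub_cancel]

theorem sum_mul_sub_sum_mul
    (hs : ∀ i : Fin C, s i = if (i : ℕ) ≤ K then sstar ⟨K, hK⟩ else sstar i) (η : Fin C → ℝ) :
    ∑ y, η y * sstar y - ∑ y, η y * s y
      = ∑ i ∈ Iic (⟨K, hK⟩ : Fin C), η i * (sstar i - sstar ⟨K, hK⟩) := by
  rw [← sum_sub_distrib, ← sum_subset (subset_univ _)]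
  · refine sum_congr rfl fun i hi => ?_
    rw [hs i, if_pos ((mem_Iic_mk hK i).mp hi), mul_sub]
  · intro i _ hi
    rw [hs i, if_neg (by rwa [mem_Iic_mk] at hi), sub_self]

theorem mul_sum_Iic_lt_one {η : Fin C → ℝ} (hsum : ∑ y, η y = 1)
    (htail : (K : ℝ) / ((K : ℝ) + 1)
      < ∑ y ∈ univ.filter (fun y : Fin C => K + 1 ≤ (y : ℕ)), η y) :
    ((K : ℝ) + 1) * ∑ i ∈ Iic (⟨K, hK⟩ : Fin C), η i < 1 := by
  have hhead : univ.filter (fun y : Fin C => ¬ K + 1 ≤ (y : ℕ)) = Iic ⟨K, hK⟩ := by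
    ext i
    rw [mem_Iic_mk, mem_filter]
    simp only [mem_univ, true_and]
    omega
  have hsplit := sum_filter_add_sum_filter_not univ (fun y : Fin C => K + 1 ≤ (y : ℕ)) η
  rw [hhead, hsum] at hsplit
  rw [div_lt_iff₀ (by positivity)] at htail
  rw [show ∑ i ∈ Iic ⟨K, hK⟩, η i
      = 1 - ∑ y ∈ univ.filter (fun y : Fin C => K + 1 ≤ (y : ℕ)), η y by linarith]
  linarith

theorem surrRisk_one_sub_lt (hK1 : 1 ≤ K)
    (h1 : ∀ i j : Fin C, i < j → (j : ℕ) ≤ K → sstar j < sstar i)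
    (h2 : ∀ j : Fin C, K + 1 ≤ (j : ℕ) → sstar j ≤ sstar ⟨K, hK⟩)
    (hs : ∀ i : Fin C, s i = if (i : ℕ) ≤ K then sstar ⟨K, hK⟩ else sstar i)
    {η : Fin C → ℝ} (hnn : ∀ y, 0 ≤ η y) (hsum : ∑ y, η y = 1)
    (htail : (K : ℝ) / ((K : ℝ) + 1)
      < ∑ y ∈ univ.filter (fun y : Fin C => K + 1 ≤ (y : ℕ)), η y) :
    surrRisk K (fun t => 1 - t) η s < surrRisk K (fun t => 1 - t) η sstar := by
  set head := Iic (⟨K, hK⟩ : Fin C)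
  set Δ := ∑ i ∈ head, (sstar i - sstar ⟨K, hK⟩)
  have hgap_nonneg : ∀ i ∈ head, 0 ≤ sstar i - sstar ⟨K, hK⟩ := fun i hi =>
    sub_nonneg.mpr (pivot_le_of_le hK h1 ((mem_Iic_mk hK i).mp hi))
  have hΔ_pos : 0 < Δ := sum_pos' hgap_nonneg
    ⟨⟨0, by omega⟩, (mem_Iic_mk hK _).mpr (Nat.zero_le K),
      sub_pos.mpr (h1 _ _ (Fin.mk_lt_mk.mpr (by omega)) le_rfl)⟩
  have hgain : ((K : ℝ) + 1) * (∑ y, η y * sstar y - ∑ y, η y * s y) < Δ :=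
    calc ((K : ℝ) + 1) * (∑ y, η y * sstar y - ∑ y, η y * s y)
        ≤ ((K : ℝ) + 1) * ∑ i ∈ head, η i * Δ := by
          rw [sum_mul_sub_sum_mul hK hs]
          gcongr with i hi
          exacts [hnn i, single_le_sum hgap_nonneg hi]
      _ < Δ := by
          rw [← sum_mul, ← mul_assoc]
          exact (mul_lt_iff_lt_one_left hΔ_pos).mpr (mul_sum_Iic_lt_one hK hsum htail)
  have hKpos : (0 : ℝ) < K := by exact_mod_cast hK1
  rw [surrRisk_one_sub_eq hsum, surrRisk_one_sub_eq hsum]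
  refine div_lt_div_of_pos_right ?_ hKpos
  linarith [sum_kthLargest_sub_sum_kthLargest hK h1 h2 hs]

end TopKCollapse

/-- Inconsistency of the hinge loss (Theorem 6 of the paper): if
`Σ_{y=K+2}^{C} η_y > K/(K+1)` for the strictly decreasing conditional probability
vector `η`, then for any top-`K` ranking-preserving score `s*` (strictly decreasing
on its first `K+1` coordinates, the remaining coordinates no larger than `s*_{K+1}`),
the score `s` obtained by collapsing the first `K+1` coordinates of `s*` to
`s*_{K+1}` is not top-`K` ranking-preserving, yet achieves a strictly smaller
hinge surrogate risk. Hence the hinge loss is not AUTKC consistent. -/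
theorem hinge_loss_inconsistent
    (C K : ℕ) (hK1 : 1 ≤ K) (hKC : K + 2 ≤ C)
    (η : Fin C → ℝ) (hnn : ∀ y, 0 ≤ η y) (hsum : ∑ y : Fin C, η y = 1)
    (hmono : StrictAnti η)
    (htail : (K : ℝ) / ((K : ℝ) + 1)
      < ∑ y ∈ Finset.univ.filter (fun y : Fin C => K + 1 ≤ (y : ℕ)), η y)
    (sstar : Fin C → ℝ)
    (h1 : ∀ i j : Fin C, i < j → (j : ℕ) ≤ K → sstar j < sstar i)
    (h2 : ∀ j : Fin C, K + 1 ≤ (j : ℕ) → sstar j ≤ sstar ⟨K, by omega⟩)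
    (s : Fin C → ℝ)
    (hs : ∀ i : Fin C, s i = if (i : ℕ) ≤ K then sstar ⟨K, by omega⟩ else sstar i) :
    ¬ RPK K η s ∧ surrRisk K hingeLoss η s < surrRisk K hingeLoss η sstar := by
  have hK : K < C := by omega
  have hs_le : ∀ i, s i ≤ s ⟨0, by omega⟩ := fun i => by
    rw [hs ⟨0, _⟩, if_pos (Nat.zero_le K)]
    exact TopKCollapse.le_pivot hK h2 hs i
  refine ⟨not_RPK_of_tie_at_max hK1 hmono.injective (a := ⟨0, by omega⟩) (b := ⟨K, hK⟩)
    (Fin.ne_of_val_ne (Nat.one_le_iff_ne_zero.mp hK1).symm) hs_le (by simp [hs]), ?_⟩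
  calc surrRisk K hingeLoss η s = surrRisk K (fun t => 1 - t) η s :=
        surrRisk_hingeLoss_eq η fun y k hk => by
          rw [TopKCollapse.kthLargest_eq_pivot hK h2 hs hk]
          linarith [TopKCollapse.le_pivot hK h2 hs y]
    _ < surrRisk K (fun t => 1 - t) η sstar :=
        TopKCollapse.surrRisk_one_sub_lt hK hK1 h1 h2 hs hnn hsum htail
    _ ≤ surrRisk K hingeLoss η sstar :=
        surrRisk_mono_loss (fun t => le_max_right 0 (1 - t)) hnn sstar
end

section
/- Let C ≥ 2 and 1 ≤ K ≤ C−1 be integers, let B_s > 0 and L_ℓ ≥ 0, and let ℓ : ℝ → ℝ be strictly decreasing on [−B_s, B_s] and L_ℓ-Lipschitz continuous on [−B_s, B_s]. Define L_K(s, y) := (1/K) Σ_{k=1}^{K+1} ℓ(s_y − s_[k]) for s ∈ ℝ^C and y ∈ {1,…,C}. Then for all s, s' ∈ [0, B_s]^C and all y ∈ {1,…,C}: |L_K(s, y) − L_K(s', y)| ≤ (L_ℓ·√(K+1)/K)·‖s − s'‖₂ + (L_ℓ·(K+1)/K)·|s_y − s'_y|. That is, L_K is Lipschitz continuous with respect to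 the variant of the ℓ2-norm involving the index y, with Lipschitz constant pair (L_ℓ√(K+1)/K, L_ℓ(K+1)/K). -/
/-- The AUTKC surrogate loss `L_K(s, y) = (1/K) Σ_{k=1}^{K+1} ℓ(s_y − s_[k])`. -/
noncomputable def LK {C : ℕ} (K : ℕ) (ℓ : ℝ → ℝ) (s : Fin C → ℝ) (y : Fin C) : ℝ :=
  (1 / (K : ℝ)) * ∑ k ∈ Finset.Icc 1 (K + 1), ℓ (s y - kthLargest s k)

/-!
Each summand of `L_K` moves by at most `L_ℓ (|s_y − s'_y| + |s_[k] − s'_[k]|)`, since all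
arguments of `ℓ` stay in `[−B_s, B_s]`. Summing over the `K + 1` indices, Cauchy–Schwarz bounds
`∑ₖ |s_[k] − s'_[k]|` by `√(K+1)` times the `ℓ2` distance of the sorted vectors, and sorting
does not increase `ℓ2` distances by the rearrangement inequality.
-/

open Finset

lemma List.insertionSort_ofFn_eq_ofFn_comp_sort {α : Type*} [LinearOrder α] {n : ℕ}
    (f : Fin n → α) :
    (List.ofFn f).insertionSort (· ≤ ·) = List.ofFn (f ∘ Tuple.sort f) :=
  List.Perm.eq_of_sortedLE List.sortedLE_insertionSort
    (List.sortedLE_ofFn_iff.mpr (Tuple.monotone_sort f))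
    ((List.perm_insertionSort _ _).trans ((Tuple.sort f).ofFn_comp_perm f).symm)

lemma kthLargest_eq_sort {C k : ℕ} (s : Fin C → ℝ) (hk : 1 ≤ k) (hkC : k ≤ C) :
    kthLargest s k = s (Tuple.sort s ⟨C - k, by omega⟩) := by
  rw [kthLargest, List.insertionSort_ofFn_eq_ofFn_comp_sort,
    List.getD_eq_getElem _ _ (by simp only [List.length_ofFn]; omega)]
  simp

lemma kthLargest_mem_range {C k : ℕ} (s : Fin C → ℝ) (hk : 1 ≤ k) (hkC : k ≤ C) :
    kthLargest s k ∈ Set.range s :=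
  kthLargest_eq_sort s hk hkC ▸ Set.mem_range_self _

lemma sub_kthLargest_mem_Icc {C k : ℕ} {B : ℝ} {t : Fin C → ℝ} (ht : ∀ i, t i ∈ Set.Icc 0 B)
    (y : Fin C) (hk : 1 ≤ k) (hkC : k ≤ C) : t y - kthLargest t k ∈ Set.Icc (-B) B := by
  obtain ⟨i, hi⟩ := kthLargest_mem_range t hk hkC
  obtain ⟨hi₀, hiB⟩ := ht i
  obtain ⟨hy₀, hyB⟩ := ht y
  rw [← hi]
  constructor <;> linarith

lemma sum_Icc_kthLargest_eq_sum_sort {C : ℕ} (s t : Fin C → ℝ) (g : ℝ → ℝ → ℝ) :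
    ∑ k ∈ Icc 1 C, g (kthLargest s k) (kthLargest t k)
      = ∑ i, g (s (Tuple.sort s i)) (t (Tuple.sort t i)) := by
  symm
  refine sum_nbij (fun i : Fin C => C - i) (fun i _ => mem_Icc.mpr ⟨by omega, by omega⟩)
    (fun i _ j _ h => Fin.ext (by simp only at h; omega)) (fun k hk => ?_) (fun i _ => ?_)
  · obtain ⟨hk, hkC⟩ := mem_Icc.mp hk
    exact ⟨⟨C - k, by omega⟩, mem_univ _, by simp only; omega⟩
  · rw [kthLargest_eq_sort s (by omega) (by omega), kthLargest_eq_sort t (by omega) (by omega)]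
    simp only [Nat.sub_sub_self i.isLt.le, Fin.eta]

section Rearrangement

variable {α : Type*} [CommRing α] [LinearOrder α] [IsStrictOrderedRing α] {n : ℕ}

lemma sum_mul_le_sum_mul_sort (a b : Fin n → α) :
    ∑ i, a i * b i ≤ ∑ i, a (Tuple.sort a i) * b (Tuple.sort b i) := by
  have hmono : Monovary (a ∘ Tuple.sort a) (b ∘ Tuple.sort b) :=
    (Tuple.monotone_sort a).monovary (Tuple.monotone_sort b)
  calc ∑ i, a i * b i = ∑ i, a (Tuple.sort a i) * b (Tuple.sort a i) :=
        (Equiv.sum_comp (Tuple.sort a) fun i => a i * b i).symm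
    _ ≤ _ := by
      simpa [Equiv.trans] using
        hmono.sum_mul_comp_perm_le_sum_mul (σ := (Tuple.sort a).trans (Tuple.sort b).symm)

lemma sum_sq_sub_sort_le (a b : Fin n → α) :
    ∑ i, (a (Tuple.sort a i) - b (Tuple.sort b i)) ^ 2 ≤ ∑ i, (a i - b i) ^ 2 := by
  have expand (f g : Fin n → α) :
      ∑ i, (f i - g i) ^ 2 = ∑ i, f i ^ 2 + ∑ i, g i ^ 2 - 2 * ∑ i, f i * g i := by
    rw [mul_sum, ← sum_add_distrib, ← sum_sub_distrib]
    exact sum_congr rfl fun i _ => by ring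
  rw [expand, expand,
    Equiv.sum_comp (Tuple.sort a) fun i => a i ^ 2,
    Equiv.sum_comp (Tuple.sort b) fun i => b i ^ 2]
  linarith [sum_mul_le_sum_mul_sort a b]

end Rearrangement

lemma Finset.sum_abs_le_sqrt_card_mul_sqrt_sum_sq {ι : Type*} (T : Finset ι) (d : ι → ℝ) :
    ∑ i ∈ T, |d i| ≤ √(#T : ℝ) * √(∑ i ∈ T, d i ^ 2) :=
  calc ∑ i ∈ T, |d i| = ∑ i ∈ T, 1 * |d i| := by simp only [one_mul]
    _ ≤ √(∑ i ∈ T, 1 ^ 2) * √(∑ i ∈ T, |d i| ^ 2) := Real.sum_mul_le_sqrt_mul_sqrt _ _ _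
    _ = √(#T : ℝ) * √(∑ i ∈ T, d i ^ 2) := by
      simp only [one_pow, sum_const, nsmul_eq_mul, mul_one, sq_abs]

lemma sum_sq_kthLargest_sub_le {C m : ℕ} (hm : m ≤ C) (s t : Fin C → ℝ) :
    ∑ k ∈ Icc 1 m, (kthLargest s k - kthLargest t k) ^ 2 ≤ ∑ i, (s i - t i) ^ 2 :=
  calc ∑ k ∈ Icc 1 m, (kthLargest s k - kthLargest t k) ^ 2
      ≤ ∑ k ∈ Icc 1 C, (kthLargest s k - kthLargest t k) ^ 2 :=
        sum_le_sum_of_subset_of_nonneg (Icc_subset_Icc_right hm) fun _ _ _ => sq_nonneg _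
    _ = ∑ i, (s (Tuple.sort s i) - t (Tuple.sort t i)) ^ 2 :=
        sum_Icc_kthLargest_eq_sum_sort s t fun x x' => (x - x') ^ 2
    _ ≤ ∑ i, (s i - t i) ^ 2 := sum_sq_sub_sort_le s t

lemma abs_LK_sub_le {C K : ℕ} {ℓ : ℝ → ℝ} {D : Set ℝ} {Ll : ℝ} (hLl : 0 ≤ Ll)
    (hlip : ∀ x ∈ D, ∀ x' ∈ D, |ℓ x - ℓ x'| ≤ Ll * |x - x'|) {s s' : Fin C → ℝ} {y : Fin C}
    (hD : ∀ k ∈ Icc 1 (K + 1), s y - kthLargest s k ∈ D ∧ s' y - kthLargest s' k ∈ D) :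
    |LK K ℓ s y - LK K ℓ s' y|
      ≤ Ll / K * (((K : ℝ) + 1) * |s y - s' y|
          + ∑ k ∈ Icc 1 (K + 1), |kthLargest s k - kthLargest s' k|) := by
  have hterm : ∀ k ∈ Icc 1 (K + 1),
      |ℓ (s y - kthLargest s k) - ℓ (s' y - kthLargest s' k)|
        ≤ Ll * (|s y - s' y| + |kthLargest s k - kthLargest s' k|) := fun k hk =>
    calc _ ≤ Ll * |s y - kthLargest s k - (s' y - kthLargest s' k)| :=
          hlip _ (hD k hk).1 _ (hD k hk).2
      _ ≤ _ := by
        gcongr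
        rw [sub_sub_sub_comm]
        exact abs_sub _ _
  rw [LK, LK, ← mul_sub, ← sum_sub_distrib, abs_mul, abs_of_nonneg (by positivity)]
  calc 1 / (K : ℝ)
        * |∑ k ∈ Icc 1 (K + 1), (ℓ (s y - kthLargest s k) - ℓ (s' y - kthLargest s' k))|
      ≤ 1 / K
        * ∑ k ∈ Icc 1 (K + 1), Ll * (|s y - s' y| + |kthLargest s k - kthLargest s' k|) := by
        gcongr
        exact (abs_sum_le_sum_abs _ _).trans (sum_le_sum hterm)
    _ = _ := by
        rw [← mul_sum, sum_add_distrib, sum_const, Nat.card_Icc]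
        simp only [nsmul_eq_mul, add_tsub_cancel_right, Nat.cast_add, Nat.cast_one]
        ring

theorem LK_lipschitz_general
    (C K : ℕ) (hKC : K + 1 ≤ C)
    (Bs Ll : ℝ) (hLl : 0 ≤ Ll)
    (ℓ : ℝ → ℝ)
    (hlip : ∀ x ∈ Set.Icc (-Bs) Bs, ∀ x' ∈ Set.Icc (-Bs) Bs, |ℓ x - ℓ x'| ≤ Ll * |x - x'|)
    (s s' : Fin C → ℝ)
    (hs : ∀ i, s i ∈ Set.Icc (0 : ℝ) Bs) (hs' : ∀ i, s' i ∈ Set.Icc (0 : ℝ) Bs)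
    (y : Fin C) :
    |LK K ℓ s y - LK K ℓ s' y|
      ≤ Ll * Real.sqrt ((K : ℝ) + 1) / K * Real.sqrt (∑ i : Fin C, (s i - s' i) ^ 2)
        + Ll * ((K : ℝ) + 1) / K * |s y - s' y| := by
  have hmem (k : ℕ) (hk : k ∈ Icc 1 (K + 1)) :
      s y - kthLargest s k ∈ Set.Icc (-Bs) Bs ∧ s' y - kthLargest s' k ∈ Set.Icc (-Bs) Bs :=
    have ⟨hk₁, hkK⟩ := mem_Icc.mp hk
    ⟨sub_kthLargest_mem_Icc hs y hk₁ (hkK.trans hKC),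
      sub_kthLargest_mem_Icc hs' y hk₁ (hkK.trans hKC)⟩
  have hsorted : ∑ k ∈ Icc 1 (K + 1), |kthLargest s k - kthLargest s' k|
      ≤ √((K : ℝ) + 1) * √(∑ i, (s i - s' i) ^ 2) := by
    refine (sum_abs_le_sqrt_card_mul_sqrt_sum_sq _ _).trans ?_
    rw [Nat.card_Icc, add_tsub_cancel_right, Nat.cast_add, Nat.cast_one]
    gcongr
    exact sum_sq_kthLargest_sub_le hKC s s'
  calc |LK K ℓ s y - LK K ℓ s' y|
      ≤ Ll / K * (((K : ℝ) + 1) * |s y - s' y|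
          + ∑ k ∈ Icc 1 (K + 1), |kthLargest s k - kthLargest s' k|) :=
        abs_LK_sub_le hLl hlip hmem
    _ ≤ Ll / K * (((K : ℝ) + 1) * |s y - s' y|
          + √((K : ℝ) + 1) * √(∑ i, (s i - s' i) ^ 2)) := by gcongr
    _ = _ := by ring

/-- Lipschitz property of the AUTKC surrogate loss (Theorem 8 of the paper): if `ℓ` is
strictly decreasing and `L_ℓ`-Lipschitz on `[−B_s, B_s]` and all scores lie in
`[0, B_s]`, then `L_K` is Lipschitz continuous with respect to the variant of the
`ℓ2`-norm involving the index `y`, with Lipschitz constant pair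
`(L_ℓ√(K+1)/K, L_ℓ(K+1)/K)`. -/
theorem LK_lipschitz
    (C K : ℕ) (hC : 2 ≤ C) (hK1 : 1 ≤ K) (hKC : K + 1 ≤ C)
    (Bs Ll : ℝ) (hBs : 0 < Bs) (hLl : 0 ≤ Ll)
    (ℓ : ℝ → ℝ) (hanti : StrictAntiOn ℓ (Set.Icc (-Bs) Bs))
    (hlip : ∀ x ∈ Set.Icc (-Bs) Bs, ∀ x' ∈ Set.Icc (-Bs) Bs, |ℓ x - ℓ x'| ≤ Ll * |x - x'|)
    (s s' : Fin C → ℝ)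
    (hs : ∀ i, s i ∈ Set.Icc (0 : ℝ) Bs) (hs' : ∀ i, s' i ∈ Set.Icc (0 : ℝ) Bs)
    (y : Fin C) :
    |LK K ℓ s y - LK K ℓ s' y|
      ≤ Ll * Real.sqrt ((K : ℝ) + 1) / K * Real.sqrt (∑ i : Fin C, (s i - s' i) ^ 2)
        + Ll * ((K : ℝ) + 1) / K * |s y - s' y| :=
  LK_lipschitz_general C K hKC Bs Ll hLl ℓ hlip s s' hs hs' y
end
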